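/- Let G = (E, V) be a locally finite weighted graph and let 𝒱 : V → ℝ be a potential that is bounded from below. Then the Schrödinger operator Δ_{G,∘} + 𝒱 is essentially self-adjoint on C_c(G), i.e., its closure Δ_G + 𝒱 is self-adjoint. -/

import Mathlib

noncomputable section

open scoped ENNReal

/-- The Hilbert space ℓ²(V) with complex coefficients. -/
abbrev l2 (V : Type*) := lp (fun _ : V => ℂ) 2

/-- The dense subspace `C_c(G)` of finitely supported functions in ℓ²(V). -/
def Cc (V : Type*) : Submodule ℂ (l2 V) where
  carrier := {f | (Function.support (⇑f : V → ℂ)).Finite}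
  add_mem' := by
    intro f g hf hg
    exact ((hf.union hg).subset (by rw [lp.coeFn_add]; exact Function.support_add _ _))
  zero_mem' := by
    have h0 : (Function.support (⇑(0 : l2 V) : V → ℂ)) = ∅ := by
      ext x; exact ⟨fun h => (Function.mem_support.mp h) (by rw [lp.coeFn_zero]; rfl), fun h => h.elim⟩
    simp only [Set.mem_setOf_eq, h0, Set.finite_empty]
  smul_mem' := by
    intro c f hf
    refine hf.subset ?_
    intro x hx
    simp only [Function.mem_support, lp.coeFn_smul, Pi.smul_apply, smul_eq_mul] at hx ⊢
    intro h0
    exact hx (by rw [h0, mul_zero])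

/-- A densely defined operator is essentially self-adjoint if it is closable
and its closure is self-adjoint. -/
def IsEssentiallySelfAdjoint {H : Type*} [NormedAddCommGroup H] [InnerProductSpace ℂ H]
    [CompleteSpace H] (T : H →ₗ.[ℂ] H) : Prop :=
  T.IsClosable ∧ IsSelfAdjoint T.closure

/-!
On finitely supported `f`, `⟪f, (Δ + 𝒱) f⟫` is the energy `½ ∑ E x y |f x - f y|²` plus
`∑ 𝒱 x |f x|² ≥ c ‖f‖²`, so `Δ + 𝒱` is symmetric and bounded below by `c`. For such an operator
`T` it suffices that `range (T - μ)` is dense for one `μ < c`: the lower bound makes the range of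
`closure T - μ` closed, so being dense it is everything, and a symmetric operator `A` with `A - μ`
surjective is self-adjoint. A vector `u` orthogonal to `range (T - μ)` satisfies
`(Δ + 𝒱) u = μ u` pointwise (test against `δ_x`), and since `u ∈ ℓ²`, `|u|` attains its maximum
at some `x`; there the discrete maximum principle gives `𝒱 x |u x|² ≤ μ |u x|²`, so `u = 0`
because `𝒱 > μ`.
-/

open scoped InnerProductSpace ComplexConjugate
open Filter Topology

theorem sub_mul_norm_le_norm_sub_smul {𝕜 H : Type*} [RCLike 𝕜] [NormedAddCommGroup H]
    [InnerProductSpace 𝕜 H] {g v : H} {c : ℝ}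
    (h : c * ‖g‖ ^ 2 ≤ RCLike.re ⟪g, v⟫_𝕜) (μ : ℝ) : (c - μ) * ‖g‖ ≤ ‖v - (μ : 𝕜) • g‖ := by
  have hre : (c - μ) * ‖g‖ ^ 2 ≤ RCLike.re ⟪g, v - (μ : 𝕜) • g⟫_𝕜 := by
    rw [inner_sub_right, inner_smul_right, AddMonoidHom.map_sub, RCLike.re_ofReal_mul,
      inner_self_eq_norm_sq]
    linarith
  rcases (norm_nonneg g).eq_or_lt with hg | hg
  · rw [← hg, mul_zero]
    exact norm_nonneg _
  · refine le_of_mul_le_mul_right ?_ hg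
    calc (c - μ) * ‖g‖ * ‖g‖ = (c - μ) * ‖g‖ ^ 2 := by ring
      _ ≤ ‖g‖ * ‖v - (μ : 𝕜) • g‖ := hre.trans (re_inner_le_norm _ _)
      _ = ‖v - (μ : 𝕜) • g‖ * ‖g‖ := mul_comm _ _

namespace LinearPMap

theorem IsClosable.closure_mem_of_isClosed {R E F : Type*} [CommRing R] [AddCommGroup E]
    [AddCommGroup F] [Module R E] [Module R F] [TopologicalSpace E] [TopologicalSpace F]
    [ContinuousAdd E] [ContinuousAdd F] [TopologicalSpace R] [ContinuousSMul R E]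
    [ContinuousSMul R F] {f : E →ₗ.[R] F} (hf : f.IsClosable) {C : Set (E × F)}
    (hC : _root_.IsClosed C) (hfC : ∀ x : f.domain, ((x : E), f x) ∈ C) (x : f.closure.domain) :
    ((x : E), f.closure x) ∈ C := by
  have hsub : (f.closure.graph : Set (E × F)) ⊆ C := by
    rw [← hf.graph_closure_eq_closure_graph, Submodule.topologicalClosure_coe]
    refine closure_minimal (fun p hp => ?_) hC
    obtain ⟨y, h₁, h₂⟩ := f.mem_graph_iff.mp hp
    rw [← Prod.mk.eta (p := p), ← h₁, ← h₂]
    exact hfC y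
  exact hsub (f.closure.mem_graph x)

variable {𝕜 H : Type*} [RCLike 𝕜] [NormedAddCommGroup H] [InnerProductSpace 𝕜 H]

theorem IsClosable.isFormalAdjoint_closure {T : H →ₗ.[𝕜] H} (hT : T.IsClosable)
    (hsym : T.IsFormalAdjoint T) : T.closure.IsFormalAdjoint T.closure := by
  have hcont : ∀ v w : H, _root_.IsClosed {p : H × H | ⟪p.2, v⟫_𝕜 = ⟪p.1, w⟫_𝕜} := fun v w =>
    isClosed_eq (continuous_snd.inner continuous_const) (continuous_fst.inner continuous_const)
  have hleft : ∀ (g : T.closure.domain) (f : T.domain),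
      ⟪T.closure g, (f : H)⟫_𝕜 = ⟪(g : H), T f⟫_𝕜 :=
    fun g f => hT.closure_mem_of_isClosed (hcont _ _) (fun x => hsym x f) g
  intro g₁ g₂
  refine hT.closure_mem_of_isClosed (hcont _ _) (fun f => ?_) g₁
  show ⟪T f, (g₂ : H)⟫_𝕜 = ⟪(f : H), T.closure g₂⟫_𝕜
  rw [← inner_conj_symm, ← hleft g₂ f, inner_conj_symm]

theorem IsClosable.mul_norm_sq_le_re_inner_closure {T : H →ₗ.[𝕜] H} (hT : T.IsClosable) {c : ℝ}
    (hbound : ∀ f : T.domain, c * ‖(f : H)‖ ^ 2 ≤ RCLike.re ⟪(f : H), T f⟫_𝕜)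
    (g : T.closure.domain) : c * ‖(g : H)‖ ^ 2 ≤ RCLike.re ⟪(g : H), T.closure g⟫_𝕜 :=
  hT.closure_mem_of_isClosed (C := {p | c * ‖p.1‖ ^ 2 ≤ RCLike.re ⟪p.1, p.2⟫_𝕜})
    (isClosed_le (by fun_prop) (RCLike.continuous_re.comp (continuous_fst.inner continuous_snd)))
    hbound g

variable [CompleteSpace H]

theorem IsClosed.isClosed_range_sub_smul {A : H →ₗ.[𝕜] H} (hA : A.IsClosed) (μ : 𝕜) {δ : ℝ}
    (hδ : 0 < δ) (hlow : ∀ g : A.domain, δ * ‖(g : H)‖ ≤ ‖A g - μ • (g : H)‖) :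
    _root_.IsClosed (Set.range fun g : A.domain => A g - μ • (g : H)) := by
  refine isClosed_of_closure_subset fun v hv => ?_
  obtain ⟨w, hw, hwv⟩ := mem_closure_iff_seq_limit.mp hv
  choose g hg using hw
  simp only at hg
  have hcauchy : CauchySeq fun n => (g n : H) := by
    rw [Metric.cauchySeq_iff]
    intro ε hε
    obtain ⟨N, hN⟩ := Metric.cauchySeq_iff.mp hwv.cauchySeq (δ * ε) (mul_pos hδ hε)
    refine ⟨N, fun m hm n hn => ?_⟩
    have hmn := hlow (g m - g n)
    rw [map_sub, Submodule.coe_sub, smul_sub, sub_sub_sub_comm, hg, hg, ← dist_eq_norm,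
      ← dist_eq_norm] at hmn
    exact lt_of_mul_lt_mul_left (hmn.trans_lt (hN m hm n hn)) hδ.le
  obtain ⟨x, hx⟩ := cauchySeq_tendsto_of_complete hcauchy
  have hAg : Tendsto (fun n => A (g n)) atTop (𝓝 (v + μ • x)) := by
    have hsum : (fun n => A (g n)) = fun n => w n + μ • (g n : H) := by
      funext n
      rw [← hg, sub_add_cancel]
    rw [hsum]
    exact hwv.add (hx.const_smul μ)
  have hmem : (x, v + μ • x) ∈ A.graph :=
    hA.mem_of_tendsto (hx.prodMk_nhds hAg) (Eventually.of_forall fun n => A.mem_graph (g n))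
  obtain ⟨y, hyx, hyA⟩ := A.mem_graph_iff.mp hmem
  exact ⟨y, show A y - μ • (y : H) = v by rw [hyA, hyx, add_sub_cancel_right]⟩

theorem IsClosed.surjective_sub_smul {A : H →ₗ.[𝕜] H} (hA : A.IsClosed) (μ : 𝕜) {δ : ℝ}
    (hδ : 0 < δ) (hlow : ∀ g : A.domain, δ * ‖(g : H)‖ ≤ ‖A g - μ • (g : H)‖)
    (hdense : ∀ u : H, (∀ g : A.domain, ⟪u, A g - μ • (g : H)⟫_𝕜 = 0) → u = 0) (v : H) :
    ∃ g : A.domain, A g - μ • (g : H) = v := by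
  set R := LinearMap.range (A.toFun - μ • A.domain.subtype)
  have hclosed : _root_.IsClosed (R : Set H) := by
    rw [LinearMap.coe_range]
    exact hA.isClosed_range_sub_smul μ hδ hlow
  have : CompleteSpace R := hclosed.completeSpace_coe
  have hperp : Rᗮ = ⊥ := (Submodule.eq_bot_iff _).mpr fun u hu =>
    hdense u fun g => (Submodule.mem_orthogonal' R u).mp hu _ ⟨g, rfl⟩
  exact (Submodule.orthogonal_eq_bot_iff.mp hperp ▸ Submodule.mem_top : v ∈ R)

theorem isSelfAdjoint_of_surjective_sub_smul {A : H →ₗ.[𝕜] H} (hA : Dense (A.domain : Set H))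
    (hsym : A.IsFormalAdjoint A) (μ : ℝ)
    (hsurj : ∀ v : H, ∃ g : A.domain, A g - (μ : 𝕜) • (g : H) = v) : IsSelfAdjoint A := by
  refine isSelfAdjoint_def.mpr (le_antisymm (le_of_le_graph fun p hp => ?_) (hsym.le_adjoint hA))
  obtain ⟨u, hu₁, hu₂⟩ := A†.mem_graph_iff.mp hp
  obtain ⟨g, hg⟩ := hsurj (A† u - (μ : 𝕜) • (u : H))
  have hinner : ∀ f : A.domain, ⟪A g, (f : H)⟫_𝕜 - μ * ⟪(g : H), f⟫_𝕜
      = ⟪A† u, (f : H)⟫_𝕜 - μ * ⟪(u : H), f⟫_𝕜 := fun f => by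
    simpa only [inner_sub_left, inner_smul_left, RCLike.conj_ofReal] using
      congrArg (⟪·, (f : H)⟫_𝕜) hg
  -- `u - g = (A - μ) f` is orthogonal to itself, since `(A† - μ) u = (A - μ) g`.
  have hug : (u : H) = g := by
    obtain ⟨f, hf⟩ := hsurj ((u : H) - g)
    rw [← sub_eq_zero, ← inner_self_eq_zero (𝕜 := 𝕜)]
    nth_rw 2 [← hf]
    rw [inner_sub_left, inner_sub_right, inner_sub_right, inner_smul_right, inner_smul_right,
      ← adjoint_isFormalAdjoint hA u f, ← hsym g f]
    linear_combination -(hinner f)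
  refine A.mem_graph_iff.mpr ⟨g, hug ▸ hu₁, ?_⟩
  rw [← hu₂, ← sub_left_inj.mp (hug ▸ hg : A g - (μ : 𝕜) • (g : H) = A† u - (μ : 𝕜) • (g : H))]

theorem isClosable_of_isFormalAdjoint_self {T : H →ₗ.[𝕜] H} (hT : Dense (T.domain : Set H))
    (hsym : T.IsFormalAdjoint T) : T.IsClosable :=
  (adjoint_isClosed hT).isClosable.leIsClosable (hsym.le_adjoint hT)

theorem isSelfAdjoint_closure_of_semibounded {T : H →ₗ.[𝕜] H} (hT : Dense (T.domain : Set H))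
    (hsym : T.IsFormalAdjoint T) {c μ : ℝ} (hμ : μ < c)
    (hbound : ∀ f : T.domain, c * ‖(f : H)‖ ^ 2 ≤ RCLike.re ⟪(f : H), T f⟫_𝕜)
    (hdense : ∀ u : H, (∀ f : T.domain, ⟪u, T f - (μ : 𝕜) • (f : H)⟫_𝕜 = 0) → u = 0) :
    IsSelfAdjoint T.closure := by
  have hclos := isClosable_of_isFormalAdjoint_self hT hsym
  have hle := T.le_closure
  refine isSelfAdjoint_of_surjective_sub_smul (hT.mono hle.1) (hclos.isFormalAdjoint_closure hsym)
    μ (hclos.closure_isClosed.surjective_sub_smul μ (sub_pos.mpr hμ)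
      (fun g => sub_mul_norm_le_norm_sub_smul (hclos.mul_norm_sq_le_re_inner_closure hbound g) μ)
      fun u hu => hdense u fun f => ?_)
  rw [hle.2 (y := ⟨f, hle.1 f.2⟩) rfl]
  exact hu _

end LinearPMap

theorem lp.exists_forall_norm_apply_le {α : Type*} {E : α → Type*} [∀ i, NormedAddCommGroup (E i)]
    {p : ℝ≥0∞} (hp : 0 < p.toReal) {f : lp E p} (hf : f ≠ 0) :
    ∃ x, f x ≠ 0 ∧ ∀ y, ‖f y‖ ≤ ‖f x‖ := by
  obtain ⟨w, hw⟩ : ∃ w, f w ≠ 0 := by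
    by_contra! h
    exact hf (lp.ext (funext h))
  have hw' : 0 < ‖f w‖ := norm_pos_iff.mpr hw
  have hfin : {i | ‖f w‖ ≤ ‖f i‖}.Finite := by
    have htend := (lp.hasSum_norm hp f).summable.tendsto_cofinite_zero
    refine (eventually_cofinite.mp (htend.eventually (gt_mem_nhds
      (Real.rpow_pos_of_pos hw' p.toReal)))).subset fun i hi => ?_
    exact not_lt.mpr (Real.rpow_le_rpow hw'.le hi hp.le)
  obtain ⟨x, hx, hmax⟩ :=
    Set.exists_max_image _ (fun i => ‖f i‖) hfin ⟨w, Set.mem_ofPred.mpr le_rfl⟩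
  refine ⟨x, norm_pos_iff.mp (hw'.trans_le hx), fun y => ?_⟩
  by_cases hy : ‖f w‖ ≤ ‖f y‖
  · exact hmax y hy
  · exact (not_le.mp hy).le.trans hx

theorem inner_l2_eq_sum {V : Type*} (u g : l2 V) {s : Finset V} (h : ∀ x, g x ≠ 0 → x ∈ s) :
    ⟪u, g⟫_ℂ = ∑ x ∈ s, conj (u x) * g x := by
  rw [lp.inner_eq_tsum, tsum_eq_sum (s := s) fun x hx => by simp [not_imp_comm.mp (h x) hx]]
  simp only [RCLike.inner_apply']

theorem norm_sq_l2_eq_sum {V : Type*} (u : l2 V) {s : Finset V} (h : ∀ x, u x ≠ 0 → x ∈ s) :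
    ‖u‖ ^ 2 = ∑ x ∈ s, ‖u x‖ ^ 2 := by
  rw [← inner_self_eq_norm_sq (𝕜 := ℂ), inner_l2_eq_sum u u h, RCLike.re_to_complex,
    Complex.re_sum]
  simp only [Complex.conj_mul', ← Complex.ofReal_pow, Complex.ofReal_re]

theorem single_mem_Cc {V : Type*} [DecidableEq V] (x : V) (a : ℂ) : lp.single 2 x a ∈ Cc V :=
  (Set.finite_singleton x).subset fun y hy => by
    by_contra hyx
    exact hy (lp.single_apply_ne (E := fun _ : V => ℂ) 2 x a hyx)

theorem dense_Cc (V : Type*) : Dense (Cc V : Set (l2 V)) := by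
  classical
  exact fun u => mem_closure_of_tendsto (lp.hasSum_single ENNReal.ofNat_ne_top u)
    (Eventually.of_forall fun s => Submodule.sum_mem _ fun x _ => single_mem_Cc x (u x))

namespace Finset

variable {ι : Type*}

theorem sum_sum_mul_comm_of_symm {R : Type*} [NonUnitalNonAssocSemiring R] {w : ι → ι → R}
    (hw : ∀ x y, w x y = w y x) (s : Finset ι) (F : ι → ι → R) :
    ∑ x ∈ s, ∑ y ∈ s, w x y * F x y = ∑ x ∈ s, ∑ y ∈ s, w x y * F y x := by
  rw [Finset.sum_comm]
  exact sum_congr rfl fun x _ => sum_congr rfl fun y _ => by rw [hw]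

theorem sum_sum_mul_mul_sub_of_symm {R : Type*} [CommRing R] {w : ι → ι → R}
    (hw : ∀ x y, w x y = w y x) (s : Finset ι) (a b : ι → R) :
    ∑ x ∈ s, ∑ y ∈ s, w x y * (a x * (b x - b y))
      = ∑ x ∈ s, ∑ y ∈ s, w x y * ((a x - a y) * b x) := by
  simp only [mul_sub, sub_mul, sum_sub_distrib]
  rw [sum_sum_mul_comm_of_symm hw s fun x y => a x * b y]

theorem re_sum_sum_mul_conj_mul_sub_nonneg {E : ι → ι → ℝ} (hE : ∀ x y, E x y = E y x)
    (hEpos : ∀ x y, 0 ≤ E x y) (s : Finset ι) (a : ι → ℂ) :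
    0 ≤ (∑ x ∈ s, ∑ y ∈ s, (E x y : ℂ) * (conj (a x) * (a x - a y))).re := by
  have htwice : 2 * ∑ x ∈ s, ∑ y ∈ s, (E x y : ℂ) * (conj (a x) * (a x - a y))
      = ((∑ x ∈ s, ∑ y ∈ s, E x y * ‖a x - a y‖ ^ 2 : ℝ) : ℂ) := by
    rw [two_mul]
    nth_rw 2 [sum_sum_mul_comm_of_symm (w := fun x y => (E x y : ℂ)) (by simp [hE])]
    simp only [← sum_add_distrib, ← mul_add, Complex.ofReal_sum, Complex.ofReal_mul,
      Complex.ofReal_pow, ← Complex.conj_mul', map_sub]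
    exact sum_congr rfl fun x _ => sum_congr rfl fun y _ => by ring
  have hnonneg : 0 ≤ ∑ x ∈ s, ∑ y ∈ s, E x y * ‖a x - a y‖ ^ 2 :=
    sum_nonneg fun x _ => sum_nonneg fun y _ => mul_nonneg (hEpos x y) (sq_nonneg _)
  have hre := congrArg Complex.re htwice
  simp only [Complex.mul_re, Complex.re_ofNat, Complex.im_ofNat, zero_mul, sub_zero,
    Complex.ofReal_re] at hre
  linarith

end Finset

namespace WeightedGraph

variable {V : Type*}

-- Defined on all of `V → ℂ`, not only on `ℓ²`, so that the eigenvalue equation of the adjoint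
-- can be stated pointwise.
def schrodinger (E : V → V → ℝ) (𝒱 : V → ℝ) (u : V → ℂ) (x : V) : ℂ :=
  (∑ᶠ y, (E x y : ℂ) * (u x - u y)) + 𝒱 x * u x

def SupportNbhdSubset (E : V → V → ℝ) (f : V → ℂ) (s : Finset V) : Prop :=
  ∀ x, f x ≠ 0 → x ∈ s ∧ ∀ y, E x y ≠ 0 → y ∈ s

variable {E : V → V → ℝ} {𝒱 : V → ℝ}

theorem schrodinger_eq_sum {s : Finset V} {x : V} (hx : ∀ y, E x y ≠ 0 → y ∈ s) (u : V → ℂ) :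
    schrodinger E 𝒱 u x = ∑ y ∈ s, (E x y : ℂ) * (u x - u y) + 𝒱 x * u x := by
  rw [schrodinger, finsum_eq_sum_of_support_subset]
  intro y hy
  exact hx y fun h => hy (by simp [h])

theorem exists_supportNbhdSubset (hloc : ∀ x, {y | E x y ≠ 0}.Finite) {f : V → ℂ}
    (hf : (Function.support f).Finite) : ∃ s, SupportNbhdSubset E f s := by
  refine ⟨(hf.union (hf.biUnion fun x _ => hloc x)).toFinset, fun x hx => ⟨?_, fun y hy => ?_⟩⟩
  · simp [hx]
  · simp only [Set.Finite.mem_toFinset]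
    exact Or.inr (Set.mem_biUnion hx hy)

namespace SupportNbhdSubset

variable {f : V → ℂ} {s : Finset V}

theorem schrodinger_eq_sum (h : SupportNbhdSubset E f s) (x : V) :
    schrodinger E 𝒱 f x = ∑ y ∈ s, (E x y : ℂ) * (f x - f y) + 𝒱 x * f x := by
  by_cases hfx : f x = 0
  · rw [schrodinger, finsum_eq_sum_of_support_subset]
    intro y hy
    rw [Function.mem_support, hfx, zero_sub, mul_neg, neg_ne_zero] at hy
    exact (h y (right_ne_zero_of_mul hy)).1
  · exact WeightedGraph.schrodinger_eq_sum (h x hfx).2 f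

theorem schrodinger_eq_zero (hE : ∀ x y, E x y = E y x) (h : SupportNbhdSubset E f s) {x : V}
    (hx : x ∉ s) : schrodinger E 𝒱 f x = 0 := by
  have hfx : f x = 0 := by_contra fun hfx => hx (h x hfx).1
  rw [h.schrodinger_eq_sum, hfx, mul_zero, add_zero]
  refine Finset.sum_eq_zero fun y _ => ?_
  by_cases hfy : f y = 0
  · simp [hfy]
  · have hxy : E x y = 0 := by
      rw [hE]
      by_contra hyx
      exact hx ((h y hfy).2 x hyx)
    simp [hxy]

theorem sum_conj_mul_schrodinger (hE : ∀ x y, E x y = E y x) (h : SupportNbhdSubset E f s)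
    (u : V → ℂ) :
    ∑ x ∈ s, conj (u x) * schrodinger E 𝒱 f x = ∑ x ∈ s, conj (schrodinger E 𝒱 u x) * f x := by
  have hu : ∀ x ∈ s, conj (schrodinger E 𝒱 u x) * f x
      = conj (∑ y ∈ s, (E x y : ℂ) * (u x - u y) + 𝒱 x * u x) * f x := fun x _ => by
    by_cases hfx : f x = 0
    · simp [hfx]
    · rw [WeightedGraph.schrodinger_eq_sum (h x hfx).2]
  rw [Finset.sum_congr rfl hu, Finset.sum_congr rfl fun x _ => by rw [h.schrodinger_eq_sum x]]
  have hgreen := Finset.sum_sum_mul_mul_sub_of_symm (w := fun x y => (E x y : ℂ))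
    (by simp [hE]) s (fun x => conj (u x)) f
  simp only [map_add, map_mul, map_sum, map_sub, Complex.conj_ofReal, mul_add, add_mul,
    Finset.sum_add_distrib, Finset.mul_sum, Finset.sum_mul]
  congr 1
  · calc _ = ∑ x ∈ s, ∑ y ∈ s, (E x y : ℂ) * (conj (u x) * (f x - f y)) :=
          Finset.sum_congr rfl fun x _ => Finset.sum_congr rfl fun y _ => by ring
      _ = _ := hgreen
      _ = _ := Finset.sum_congr rfl fun x _ => Finset.sum_congr rfl fun y _ => by ring
  · exact Finset.sum_congr rfl fun x _ => by ring

theorem mul_sum_norm_sq_le_re_sum (hE : ∀ x y, E x y = E y x) (hEpos : ∀ x y, 0 ≤ E x y) {c : ℝ}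
    (h𝒱 : ∀ x, c ≤ 𝒱 x) (h : SupportNbhdSubset E f s) :
    c * ∑ x ∈ s, ‖f x‖ ^ 2 ≤ (∑ x ∈ s, conj (f x) * schrodinger E 𝒱 f x).re := by
  have hkin := Finset.re_sum_sum_mul_conj_mul_sub_nonneg hE hEpos s f
  have hpot : c * ∑ x ∈ s, ‖f x‖ ^ 2 ≤ (∑ x ∈ s, conj (f x) * (𝒱 x * f x)).re := by
    rw [Finset.mul_sum, Complex.re_sum]
    refine Finset.sum_le_sum fun x _ => ?_
    rw [mul_left_comm, Complex.conj_mul', ← Complex.ofReal_pow, ← Complex.ofReal_mul,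
      Complex.ofReal_re]
    exact mul_le_mul_of_nonneg_right (h𝒱 x) (sq_nonneg _)
  have hsplit : ∑ x ∈ s, conj (f x) * schrodinger E 𝒱 f x
      = ∑ x ∈ s, ∑ y ∈ s, (E x y : ℂ) * (conj (f x) * (f x - f y))
        + ∑ x ∈ s, conj (f x) * (𝒱 x * f x) := by
    simp only [h.schrodinger_eq_sum, mul_add, Finset.sum_add_distrib, Finset.mul_sum]
    congr 1
    exact Finset.sum_congr rfl fun x _ => Finset.sum_congr rfl fun y _ => mul_left_comm _ _ _
  rw [hsplit, Complex.add_re]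
  linarith

end SupportNbhdSubset

theorem mul_norm_sq_le_re_conj_mul_schrodinger (hEpos : ∀ x y, 0 ≤ E x y) {x : V}
    (hloc : {y | E x y ≠ 0}.Finite) {u : V → ℂ} (hmax : ∀ y, ‖u y‖ ≤ ‖u x‖) :
    𝒱 x * ‖u x‖ ^ 2 ≤ (conj (u x) * schrodinger E 𝒱 u x).re := by
  have hterm : ∀ y, 0 ≤ (conj (u x) * ((E x y : ℂ) * (u x - u y))).re := fun y => by
    rw [mul_left_comm, Complex.re_ofReal_mul, mul_sub, Complex.sub_re, Complex.conj_mul',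
      ← Complex.ofReal_pow, Complex.ofReal_re]
    refine mul_nonneg (hEpos x y) (sub_nonneg.mpr ?_)
    calc (conj (u x) * u y).re ≤ ‖u x‖ * ‖u y‖ := by
          simpa using Complex.re_le_norm (conj (u x) * u y)
      _ ≤ ‖u x‖ ^ 2 := by nlinarith [hmax y, norm_nonneg (u x)]
  rw [schrodinger_eq_sum (s := hloc.toFinset) (fun y hy => hloc.mem_toFinset.mpr hy), mul_add,
    Complex.add_re, Finset.mul_sum, Complex.re_sum, mul_left_comm, Complex.conj_mul',
    ← Complex.ofReal_pow, ← Complex.ofReal_mul, Complex.ofReal_re]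
  linarith [Finset.sum_nonneg fun y (_ : y ∈ hloc.toFinset) => hterm y]

theorem eq_zero_of_schrodinger_eq_smul (hEpos : ∀ x y, 0 ≤ E x y)
    (hloc : ∀ x, {y | E x y ≠ 0}.Finite) {μ : ℝ} (h𝒱 : ∀ x, μ < 𝒱 x) (u : l2 V)
    (hu : ∀ x, schrodinger E 𝒱 u x = μ * u x) : u = 0 := by
  by_contra hu0
  obtain ⟨x, hx, hmax⟩ := lp.exists_forall_norm_apply_le (by norm_num) hu0
  have hle := mul_norm_sq_le_re_conj_mul_schrodinger (𝒱 := 𝒱) hEpos (hloc x) hmax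
  rw [hu x, mul_left_comm, Complex.conj_mul', ← Complex.ofReal_pow, ← Complex.ofReal_mul,
    Complex.ofReal_re] at hle
  exact hle.not_gt (mul_lt_mul_of_pos_right (h𝒱 x) (by positivity))

section L2

variable {H : l2 V →ₗ.[ℂ] l2 V}

theorem mem_of_apply_ne_zero (hE : ∀ x y, E x y = E y x)
    (hH : ∀ f : H.domain, ⇑(H f) = schrodinger E 𝒱 ⇑(f : l2 V)) {f : H.domain} {s : Finset V}
    (hs : SupportNbhdSubset E (f : l2 V) s) {x : V} (hx : H f x ≠ 0) : x ∈ s := by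
  by_contra hxs
  exact hx (by rw [hH]; exact hs.schrodinger_eq_zero hE hxs)

theorem inner_apply_eq_sum (hE : ∀ x y, E x y = E y x)
    (hH : ∀ f : H.domain, ⇑(H f) = schrodinger E 𝒱 ⇑(f : l2 V)) (u : l2 V) {f : H.domain}
    {s : Finset V} (hs : SupportNbhdSubset E (f : l2 V) s) :
    ⟪u, H f⟫_ℂ = ∑ x ∈ s, conj (schrodinger E 𝒱 u x) * (f : l2 V) x := by
  rw [inner_l2_eq_sum u _ fun x => mem_of_apply_ne_zero hE hH hs, hH,
    hs.sum_conj_mul_schrodinger hE]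

theorem isFormalAdjoint_self (hE : ∀ x y, E x y = E y x) (hloc : ∀ x, {y | E x y ≠ 0}.Finite)
    (hdom : H.domain = Cc V) (hH : ∀ f : H.domain, ⇑(H f) = schrodinger E 𝒱 ⇑(f : l2 V)) :
    H.IsFormalAdjoint H := by
  intro f g
  obtain ⟨s, hs⟩ := exists_supportNbhdSubset hloc (hdom ▸ g.2 : (g : l2 V) ∈ Cc V)
  rw [inner_apply_eq_sum hE hH _ hs, inner_l2_eq_sum _ _ fun x hx => (hs x hx).1, hH]

theorem mul_norm_sq_le_re_inner_apply (hE : ∀ x y, E x y = E y x) (hEpos : ∀ x y, 0 ≤ E x y)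
    (hloc : ∀ x, {y | E x y ≠ 0}.Finite) {c : ℝ} (h𝒱 : ∀ x, c ≤ 𝒱 x) (hdom : H.domain = Cc V)
    (hH : ∀ f : H.domain, ⇑(H f) = schrodinger E 𝒱 ⇑(f : l2 V)) (f : H.domain) :
    c * ‖(f : l2 V)‖ ^ 2 ≤ RCLike.re ⟪(f : l2 V), H f⟫_ℂ := by
  obtain ⟨s, hs⟩ := exists_supportNbhdSubset hloc (hdom ▸ f.2 : (f : l2 V) ∈ Cc V)
  rw [norm_sq_l2_eq_sum _ fun x hx => (hs x hx).1,
    inner_l2_eq_sum _ _ fun x => mem_of_apply_ne_zero hE hH hs, hH]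
  exact hs.mul_sum_norm_sq_le_re_sum hE hEpos h𝒱

theorem eq_zero_of_inner_sub_smul_eq_zero (hE : ∀ x y, E x y = E y x)
    (hEpos : ∀ x y, 0 ≤ E x y) (hloc : ∀ x, {y | E x y ≠ 0}.Finite) {μ : ℝ}
    (h𝒱 : ∀ x, μ < 𝒱 x) (hdom : H.domain = Cc V)
    (hH : ∀ f : H.domain, ⇑(H f) = schrodinger E 𝒱 ⇑(f : l2 V)) (u : l2 V)
    (hu : ∀ f : H.domain, ⟪u, H f - (μ : ℂ) • (f : l2 V)⟫_ℂ = 0) : u = 0 := by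
  classical
  refine eq_zero_of_schrodinger_eq_smul hEpos hloc h𝒱 u fun x => ?_
  have hδ : lp.single 2 x 1 ∈ Cc V := single_mem_Cc x 1
  obtain ⟨s, hs⟩ := exists_supportNbhdSubset (E := E) hloc hδ
  have hδx : ∀ y, (lp.single 2 x (1 : ℂ) : l2 V) y ≠ 0 → y ∈ ({x} : Finset V) := fun y hy =>
    Finset.mem_singleton.mpr (by_contra fun hyx => hy (by simp [Pi.single_eq_of_ne hyx]))
  have hx : x ∈ s := (hs x (by simp)).1
  have h := hu ⟨lp.single 2 x 1, hdom ▸ hδ⟩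
  rw [inner_sub_right, inner_smul_right, inner_apply_eq_sum hE hH u hs, inner_l2_eq_sum u _ hδx,
    Finset.sum_eq_single_of_mem x hx fun y _ hyx => by simp [Pi.single_eq_of_ne hyx],
    Finset.sum_singleton] at h
  simpa [sub_eq_zero] using congrArg conj h

end L2

end WeightedGraph

theorem stmt0_general {V : Type*} (E : V → V → ℝ)
    (hEsymm : ∀ x y, E x y = E y x) (hEpos : ∀ x y, 0 ≤ E x y)
    (hlocfin : ∀ x, {y | E x y ≠ 0}.Finite)
    (𝒱 : V → ℝ) (h𝒱 : ∃ c : ℝ, ∀ x, c ≤ 𝒱 x)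
    (H : l2 V →ₗ.[ℂ] l2 V) (hdom : H.domain = Cc V)
    (hH : ∀ f : H.domain, ∀ x : V,
      H f x = (∑ᶠ y, (E x y : ℂ) * ((f : l2 V) x - (f : l2 V) y)) + 𝒱 x * (f : l2 V) x) :
    IsEssentiallySelfAdjoint H := by
  obtain ⟨c, hc⟩ := h𝒱
  have hH' : ∀ f : H.domain, ⇑(H f) = WeightedGraph.schrodinger E 𝒱 ⇑(f : l2 V) :=
    fun f => funext (hH f)
  have hdense : Dense (H.domain : Set (l2 V)) := hdom ▸ dense_Cc V
  have hsym := WeightedGraph.isFormalAdjoint_self hEsymm hlocfin hdom hH'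
  have h𝒱 : ∀ x, c - 1 < 𝒱 x := fun x => (sub_one_lt c).trans_le (hc x)
  exact ⟨LinearPMap.isClosable_of_isFormalAdjoint_self hdense hsym,
    LinearPMap.isSelfAdjoint_closure_of_semibounded hdense hsym (sub_one_lt c)
      (WeightedGraph.mul_norm_sq_le_re_inner_apply hEsymm hEpos hlocfin hc hdom hH')
      (WeightedGraph.eq_zero_of_inner_sub_smul_eq_zero hEsymm hEpos hlocfin h𝒱 hdom hH')⟩

theorem stmt0 {V : Type*} [Countable V] (E : V → V → ℝ)
    (hEsymm : ∀ x y, E x y = E y x) (hEpos : ∀ x y, 0 ≤ E x y)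
    (hEloop : ∀ x, E x x = 0)
    (hlocfin : ∀ x, {y | E x y ≠ 0}.Finite)
    (𝒱 : V → ℝ) (h𝒱 : ∃ c : ℝ, ∀ x, c ≤ 𝒱 x)
    (H : l2 V →ₗ.[ℂ] l2 V) (hdom : H.domain = Cc V)
    (hH : ∀ f : H.domain, ∀ x : V,
      H f x = (∑ᶠ y, (E x y : ℂ) * ((f : l2 V) x - (f : l2 V) y)) + 𝒱 x * (f : l2 V) x) :
    IsEssentiallySelfAdjoint H :=
  stmt0_general E hEsymm hEpos hlocfin 𝒱 h𝒱 H hdom hH
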